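/- arXiv:2211.16615 — 7 statements merged into one kernel-verified Lean document; each statement's English description precedes it below -/
import Mathlib

section
/- Let U ⊆ ℂ be open, let ℏ ∈ ℂ with ℏ ≠ 0, and let a, b, c : U → ℂ be holomorphic with c(z) ≠ 0 for every z ∈ U. Let r : U → ℂ be holomorphic with r(z)² = ℏ/c(z) for all z ∈ U (a holomorphic branch of √(ℏ/c)). Suppose ψ₁, ψ₂ : U → ℂ are differentiable on U and satisfy ℏ·ψ₁′(z) = a(z)ψ₁(z) + b(z)ψ₂(z) and ℏ·ψ₂′(z) = c(z)ψ₁(z) − a(z)ψ₂(z) for all z ∈ U. Then the function f := r·ψ₂ is twice differentiable on U and satisfies f″(z) = Q(z)·f(z) for all z ∈ U, where Q(z) = (a(z)² + b(z)c(z))/ℏ² + (a(z)·c′(z)/c(z) − a′(z))/ℏ + (3/4)·(c′(z)/c(z))² − (1/2)·c″(z)/c(z). -/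
/-!
Eliminating `ψ₁` from the system shows that `ψ₂` solves
`ψ₂″ = (c′/c) ψ₂′ + (Q₀/ℏ² + Q₁/ℏ) ψ₂`. Differentiating `r² = ℏ/c` gives `r′ = -(c′/(2c)) r`,
so multiplying by `r` is the Liouville transformation removing the first-order term of
`y″ = p y′ + q y`: the function `r y` solves `(r y)″ = (q + p²/4 - p′/2) r y`, and for `p = c′/c`
one has `p²/4 - p′/2 = Q₂`.
-/

open Filter Topology

section

variable {𝕜 : Type*} [NontriviallyNormedField 𝕜]

theorem hasDerivAt_of_sq_eventuallyEq [CharZero 𝕜] {r g : 𝕜 → 𝕜} {g' z : 𝕜}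
    (hr : DifferentiableAt 𝕜 r z) (hrz : r z ≠ 0) (hsq : (fun w => r w ^ 2) =ᶠ[𝓝 z] g)
    (hg : HasDerivAt g g' z) :
    HasDerivAt r (g' / (2 * r z)) z := by
  have hsq' : HasDerivAt g (2 * r z * deriv r z) z := by
    simpa using (hr.hasDerivAt.pow 2).congr_of_eventuallyEq hsq.symm
  rw [hg.unique hsq', mul_div_cancel_left₀ _ (mul_ne_zero two_ne_zero hrz)]
  exact hr.hasDerivAt

theorem hasDerivAt_of_sq_eq_const_div [CharZero 𝕜] {r c : 𝕜 → 𝕜} {ℏ c' z : 𝕜}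
    (hr : DifferentiableAt 𝕜 r z) (hsq : ∀ᶠ w in 𝓝 z, r w ^ 2 = ℏ / c w) (hℏ : ℏ ≠ 0)
    (hc : HasDerivAt c c' z) (hcz : c z ≠ 0) :
    HasDerivAt r (-(c' / c z / 2) * r z) z := by
  have hrz : r z ≠ 0 := by
    intro h
    simpa [h, hℏ, hcz, eq_comm] using hsq.self_of_nhds
  have hℏ' : ℏ = r z ^ 2 * c z := by
    rw [hsq.self_of_nhds, div_mul_cancel₀ _ hcz]
  convert hasDerivAt_of_sq_eventuallyEq hr hrz hsq ((hasDerivAt_const z ℏ).div hc hcz) using 1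
  rw [hℏ']
  field_simp
  ring

theorem hasDerivAt_deriv_snd_of_traceless_system {a b c ψ₁ ψ₂ ψ₂' : 𝕜 → 𝕜} {ℏ a' c' ψ₁' z : 𝕜}
    (hℏ : ℏ ≠ 0) (hcz : c z ≠ 0) (ha : HasDerivAt a a' z) (hc : HasDerivAt c c' z)
    (hψ₁ : HasDerivAt ψ₁ ψ₁' z) (hψ₂ : HasDerivAt ψ₂ (ψ₂' z) z)
    (heq₁ : ℏ * ψ₁' = a z * ψ₁ z + b z * ψ₂ z)
    (heq₂ : ∀ᶠ w in 𝓝 z, ℏ * ψ₂' w = c w * ψ₁ w - a w * ψ₂ w) :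
    HasDerivAt ψ₂' (c' / c z * ψ₂' z
      + ((a z ^ 2 + b z * c z) / ℏ ^ 2 + (a z * c' / c z - a') / ℏ) * ψ₂ z) z := by
  have hψ₂' : ψ₂' =ᶠ[𝓝 z] fun w => (c w * ψ₁ w - a w * ψ₂ w) / ℏ :=
    heq₂.mono fun w hw => (eq_div_iff hℏ).2 ((mul_comm _ _).trans hw)
  refine (((hc.fun_mul hψ₁).fun_sub (ha.fun_mul hψ₂)).div_const ℏ).congr_of_eventuallyEq hψ₂'
    |>.congr_deriv ?_
  field_simp
  linear_combination c z ^ 2 * heq₁ - (c z * a z + ℏ * c') * heq₂.self_of_nhds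

theorem hasDerivAt_liouville_transform {r y y' p : 𝕜 → 𝕜} {z : 𝕜}
    (hr : HasDerivAt r (-(p z / 2) * r z) z) (hy : HasDerivAt y (y' z) z) :
    HasDerivAt (fun w => r w * y w) (r z * (y' z - p z * y z / 2)) z :=
  (hr.fun_mul hy).congr_deriv (by ring)

theorem hasDerivAt_liouville_transform_deriv [CharZero 𝕜] {r y y' p : 𝕜 → 𝕜} {q p' z : 𝕜}
    (hr : HasDerivAt r (-(p z / 2) * r z) z) (hy : HasDerivAt y (y' z) z)
    (hy' : HasDerivAt y' (p z * y' z + q * y z) z) (hp : HasDerivAt p p' z) :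
    HasDerivAt (fun w => r w * (y' w - p w * y w / 2))
      ((q + p z ^ 2 / 4 - p' / 2) * (r z * y z)) z :=
  (hr.fun_mul (hy'.fun_sub ((hp.fun_mul hy).div_const 2))).congr_deriv (by ring)

end

theorem second_order_reduction_general
    (U : Set ℂ) (hU : IsOpen U) (ℏ : ℂ) (hℏ : ℏ ≠ 0)
    (a b c r ψ₁ ψ₂ a' c' c'' ψ₁' ψ₂' : ℂ → ℂ)
    (ha : ∀ z ∈ U, HasDerivAt a (a' z) z)
    (hc : ∀ z ∈ U, HasDerivAt c (c' z) z)
    (hc' : ∀ z ∈ U, HasDerivAt c' (c'' z) z)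
    (hcne : ∀ z ∈ U, c z ≠ 0)
    (hr : ∀ z ∈ U, DifferentiableAt ℂ r z)
    (hr2 : ∀ z ∈ U, (r z) ^ 2 = ℏ / c z)
    (hψ₁ : ∀ z ∈ U, HasDerivAt ψ₁ (ψ₁' z) z)
    (hψ₂ : ∀ z ∈ U, HasDerivAt ψ₂ (ψ₂' z) z)
    (heq₁ : ∀ z ∈ U, ℏ * ψ₁' z = a z * ψ₁ z + b z * ψ₂ z)
    (heq₂ : ∀ z ∈ U, ℏ * ψ₂' z = c z * ψ₁ z - a z * ψ₂ z) :
    ∃ f' : ℂ → ℂ,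
      (∀ z ∈ U, HasDerivAt (fun w => r w * ψ₂ w) (f' z) z) ∧
      (∀ z ∈ U, HasDerivAt f'
        (((a z ^ 2 + b z * c z) / ℏ ^ 2
          + (a z * c' z / c z - a' z) / ℏ
          + (3 / 4) * (c' z / c z) ^ 2
          - (1 / 2) * (c'' z / c z)) * (r z * ψ₂ z)) z) := by
  have near {P : ℂ → Prop} {z : ℂ} (hz : z ∈ U) (hP : ∀ w ∈ U, P w) : ∀ᶠ w in 𝓝 z, P w :=
    eventually_of_mem (hU.mem_nhds hz) hP
  have hr' : ∀ z ∈ U, HasDerivAt r (-(c' z / c z / 2) * r z) z := fun z hz =>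
    hasDerivAt_of_sq_eq_const_div (hr z hz) (near hz hr2) hℏ (hc z hz) (hcne z hz)
  refine ⟨fun w => r w * (ψ₂' w - c' w / c w * ψ₂ w / 2), fun z hz => ?_, fun z hz => ?_⟩
  · exact hasDerivAt_liouville_transform (p := fun w => c' w / c w) (hr' z hz) (hψ₂ z hz)
  · have hψ₂' := hasDerivAt_deriv_snd_of_traceless_system hℏ (hcne z hz) (ha z hz) (hc z hz)
      (hψ₁ z hz) (hψ₂ z hz) (heq₁ z hz) (near hz heq₂)
    refine (hasDerivAt_liouville_transform_deriv (p := fun w => c' w / c w) (hr' z hz)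
      (hψ₂ z hz) hψ₂' ((hc' z hz).div (hc z hz) (hcne z hz))).congr_deriv ?_
    have hcz := hcne z hz
    field_simp
    ring

/-- Reduction of the 2×2 traceless first-order system `ℏΨ′ = R(z)Ψ`,
`R = [[a, b], [c, −a]]`, to the second-order scalar equation `f″ = Q f`
for `f = √(ℏ/c)·ψ₂`, with
`Q = (a² + bc)/ℏ² + (a·c′/c − a′)/ℏ + (3/4)(c′/c)² − (1/2)c″/c`. -/
theorem second_order_reduction
    (U : Set ℂ) (hU : IsOpen U) (ℏ : ℂ) (hℏ : ℏ ≠ 0)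
    (a b c r ψ₁ ψ₂ a' c' c'' ψ₁' ψ₂' : ℂ → ℂ)
    (ha : ∀ z ∈ U, HasDerivAt a (a' z) z)
    (hb : ∀ z ∈ U, DifferentiableAt ℂ b z)
    (hc : ∀ z ∈ U, HasDerivAt c (c' z) z)
    (hc' : ∀ z ∈ U, HasDerivAt c' (c'' z) z)
    (hcne : ∀ z ∈ U, c z ≠ 0)
    (hr : ∀ z ∈ U, DifferentiableAt ℂ r z)
    (hr2 : ∀ z ∈ U, (r z) ^ 2 = ℏ / c z)
    (hψ₁ : ∀ z ∈ U, HasDerivAt ψ₁ (ψ₁' z) z)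
    (hψ₂ : ∀ z ∈ U, HasDerivAt ψ₂ (ψ₂' z) z)
    (heq₁ : ∀ z ∈ U, ℏ * ψ₁' z = a z * ψ₁ z + b z * ψ₂ z)
    (heq₂ : ∀ z ∈ U, ℏ * ψ₂' z = c z * ψ₁ z - a z * ψ₂ z) :
    ∃ f' : ℂ → ℂ,
      (∀ z ∈ U, HasDerivAt (fun w => r w * ψ₂ w) (f' z) z) ∧
      (∀ z ∈ U, HasDerivAt f'
        (((a z ^ 2 + b z * c z) / ℏ ^ 2
          + (a z * c' z / c z - a' z) / ℏ
          + (3 / 4) * (c' z / c z) ^ 2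
          - (1 / 2) * (c'' z / c z)) * (r z * ψ₂ z)) z) :=
  second_order_reduction_general U hU ℏ hℏ a b c r ψ₁ ψ₂ a' c' c'' ψ₁' ψ₂' ha hc hc' hcne hr hr2 hψ₁
    hψ₂ heq₁ heq₂
end

section
/- Let ρ > 0, let A, B ∈ ℂ, and let w be a holomorphic function on the open disc D(0,ρ) ⊆ ℂ. Then the following are equivalent: (i) A² = B; (ii) there exist 0 < ρ′ ≤ ρ and a holomorphic function h on D(0,ρ′) with h(0) = 1 such that z·h″(z) − h′(z) = (A + B·z + z²·w(z))·h(z) for all z ∈ D(0,ρ′). -/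
/-!
Write `q = A + B z + z² w = ∑ aₙ zⁿ` and look for `h = ∑ cₙ zⁿ`. Comparing coefficients of `zⁿ`
in `z h'' - h' = q h` gives `(n² - 1) cₙ₊₁ = ∑_{k ≤ n} aₖ cₙ₋ₖ`. For `n = 0` this forces
`c₁ = -a₀`, for `n = 1` it says `a₁ = a₀²`, i.e. `B = A²`, and for `n ≥ 2` it determines `cₙ₊₁`.
When `B = A²` the recurrence has a solution with `‖cₙ‖ ≤ Mⁿ`, so the series converges near `0`.
Conversely, the equation and its derivative at `0` read `-h'(0) = q(0)` and
`0 = q'(0) + q(0) h'(0)`, whence `q'(0) = q(0)²`.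
-/

open Metric Finset Topology

-- `c 2` is free: changing it adds a multiple of the solution `z² + O(z³)`.
noncomputable def frobeniusCoeff (a : ℕ → ℂ) : ℕ → ℂ
  | 0 => 1
  | 1 => -a 0
  | 2 => 0
  | n + 3 =>
      (∑ k ∈ range (n + 3), a k * frobeniusCoeff a (n + 2 - k)) / (((n : ℂ) + 1) * ((n : ℂ) + 3))
  decreasing_by omega

theorem frobeniusCoeff_recurrence {a : ℕ → ℂ} (ha : a 1 = a 0 ^ 2) (m : ℕ) :
    ((m : ℂ) ^ 2 - 1) * frobeniusCoeff a (m + 1) =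
      ∑ k ∈ range (m + 1), a k * frobeniusCoeff a (m - k) := by
  match m with
  | 0 => simp [frobeniusCoeff]
  | 1 => simp [frobeniusCoeff, sum_range_succ, ha, sq]
  | n + 2 =>
    have hden : ((n + 2 : ℕ) : ℂ) ^ 2 - 1 = ((n : ℂ) + 1) * ((n : ℂ) + 3) := by push_cast; ring
    rw [frobeniusCoeff, hden, mul_div_cancel₀ _ (by norm_cast)]

theorem norm_frobeniusCoeff_le {a : ℕ → ℂ} {M : ℝ} (hM : ∀ k, ‖a k‖ ≤ M ^ (k + 1)) (n : ℕ) :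
    ‖frobeniusCoeff a n‖ ≤ M ^ n := by
  induction n using Nat.strong_induction_on with
  | _ n ih =>
    match n with
    | 0 => simp [frobeniusCoeff]
    | 1 => simpa [frobeniusCoeff] using hM 0
    | 2 => simpa [frobeniusCoeff] using sq_nonneg M
    | n + 3 =>
      have hM0 : 0 ≤ M := (norm_nonneg _).trans (by simpa using hM 0)
      have hterm : ∀ k ∈ range (n + 3), ‖a k * frobeniusCoeff a (n + 2 - k)‖ ≤ M ^ (n + 3) := by
        intro k hk
        rw [norm_mul, show n + 3 = k + 1 + (n + 2 - k) by have := mem_range.mp hk; omega, pow_add]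
        exact mul_le_mul (hM k) (ih _ (by omega)) (norm_nonneg _) (by positivity)
      have hsum := (norm_sum_le _ _).trans (sum_le_sum hterm)
      rw [sum_const, card_range, nsmul_eq_mul] at hsum
      have hden : ‖((n : ℂ) + 1) * ((n : ℂ) + 3)‖ = (n + 1) * (n + 3) := by
        rw [norm_mul]; norm_cast
      rw [frobeniusCoeff, norm_div, hden, div_le_iff₀ (by positivity)]
      push_cast at hsum
      have : (0 : ℝ) ≤ n * (n + 3) * M ^ (n + 3) := by positivity
      linarith

section PowerSeries

variable {a c : ℕ → ℂ} {C M : ℝ} {z : ℂ}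

theorem summable_norm_mul_pow_of_norm_le (hc : ∀ n, ‖c n‖ ≤ C * M ^ n) (hM : 0 ≤ M)
    (hz : ‖z‖ * M < 1) : Summable fun n => ‖c n * z ^ n‖ := by
  refine .of_nonneg_of_le (fun n => norm_nonneg _) (fun n => ?_)
    ((summable_geometric_of_lt_one (by positivity) hz).mul_left C)
  rw [norm_mul, norm_pow, mul_pow, ← mul_assoc, mul_right_comm]
  exact mul_le_mul_of_nonneg_right (hc n) (by positivity)

theorem norm_succ_mul_coeff_succ_le (hc : ∀ n, ‖c n‖ ≤ C * M ^ n) (n : ℕ) :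
    ‖((n : ℂ) + 1) * c (n + 1)‖ ≤ C * M * (2 * M) ^ n := by
  have h2 : (n : ℝ) + 1 ≤ 2 ^ n := by exact_mod_cast Nat.lt_two_pow_self
  have hn : ‖(n : ℂ) + 1‖ = n + 1 := by exact_mod_cast Complex.norm_natCast (n + 1)
  calc _ ≤ (2 : ℝ) ^ n * (C * M ^ (n + 1)) := by
        rw [norm_mul, hn]; exact mul_le_mul h2 (hc _) (norm_nonneg _) (by positivity)
    _ = C * M * (2 * M) ^ n := by ring

theorem hasDerivAt_tsum_mul_pow (hc : ∀ n, ‖c n‖ ≤ C * M ^ n) (hM : 0 < M) (hz : ‖z‖ * M < 1) :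
    HasDerivAt (fun y => ∑' n, c n * y ^ n) (∑' n : ℕ, ((n : ℂ) + 1) * c (n + 1) * z ^ n) z := by
  obtain ⟨t, hzt, htM⟩ := exists_between ((lt_div_iff₀ hM).mpr hz)
  have htM : t * M < 1 := (lt_div_iff₀ hM).mp htM
  have hbound : ∀ n, ∀ y ∈ ball (0 : ℂ) t, ‖c n * y ^ n‖ ≤ C * (t * M) ^ n := by
    intro n y hy
    rw [mem_ball_zero_iff] at hy
    rw [norm_mul, norm_pow, mul_pow, ← mul_assoc, mul_right_comm]
    exact mul_le_mul (hc n) (pow_le_pow_left₀ (norm_nonneg y) hy.le n) (by positivity)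
      ((norm_nonneg _).trans (hc n))
  have hsum : Summable fun n => C * (t * M) ^ n :=
    (summable_geometric_of_lt_one (by nlinarith [norm_nonneg z]) htM).mul_left C
  have hdiff : ∀ n, DifferentiableOn ℂ (fun y => c n * y ^ n) (ball 0 t) := fun n => by fun_prop
  have hzU : z ∈ ball (0 : ℂ) t := by simpa using hzt
  have hF := Complex.differentiableOn_tsum_of_summable_norm hsum hdiff isOpen_ball hbound
  have hD := Complex.hasSum_deriv_of_summable_norm hsum hdiff isOpen_ball hbound hzU
  rw [← hasSum_nat_add_iff' 1] at hD
  have hD' : HasSum (fun n : ℕ => ((n : ℂ) + 1) * c (n + 1) * z ^ n)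
      (deriv (fun y => ∑' n, c n * y ^ n) z) := by
    simpa [mul_assoc, mul_comm] using hD
  exact hD'.tsum_eq ▸ ((hF z hzU).differentiableAt (isOpen_ball.mem_nhds hzU)).hasDerivAt

theorem hasSum_sum_range_mul_mul_pow (ha : Summable fun n => ‖a n * z ^ n‖)
    (hc : Summable fun n => ‖c n * z ^ n‖) :
    HasSum (fun n => (∑ k ∈ range (n + 1), a k * c (n - k)) * z ^ n)
      ((∑' n, a n * z ^ n) * ∑' n, c n * z ^ n) := by
  refine (hasSum_sum_range_mul_of_summable_norm ha hc).congr_fun fun n => ?_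
  rw [sum_mul]
  refine sum_congr rfl fun k hk => ?_
  rw [← pow_mul_pow_sub z (Nat.le_of_lt_succ (mem_range.mp hk))]
  ring

theorem mul_sub_eq_of_hasSum_of_recurrence {h' h'' P : ℂ}
    (hrec : ∀ m : ℕ, ((m : ℂ) ^ 2 - 1) * c (m + 1) = ∑ k ∈ range (m + 1), a k * c (m - k))
    (h₁ : HasSum (fun n : ℕ => ((n : ℂ) + 1) * c (n + 1) * z ^ n) h')
    (h₂ : HasSum (fun n : ℕ => ((n : ℂ) + 1) * ((((n + 1 : ℕ) : ℂ) + 1) * c (n + 2)) * z ^ n) h'')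
    (hP : HasSum (fun n => (∑ k ∈ range (n + 1), a k * c (n - k)) * z ^ n) P) :
    z * h'' - h' = P := by
  have hz : HasSum (fun n : ℕ => (n : ℂ) * (n + 1) * c (n + 1) * z ^ n) (z * h'') := by
    rw [← hasSum_nat_add_iff' 1]
    simpa [pow_succ, mul_comm, mul_left_comm, mul_assoc] using h₂.mul_left z
  refine (hz.sub h₁).unique (hP.congr_fun fun n => ?_)
  rw [← hrec]
  ring

theorem mul_deriv_deriv_sub_deriv_tsum_mul_pow (hc : ∀ n, ‖c n‖ ≤ C * M ^ n) (hM : 0 < M)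
    (hrec : ∀ m : ℕ, ((m : ℂ) ^ 2 - 1) * c (m + 1) = ∑ k ∈ range (m + 1), a k * c (m - k))
    (ha : Summable fun n => ‖a n * z ^ n‖) (hz : ‖z‖ * (4 * M) < 1) :
    z * deriv (deriv fun y => ∑' n, c n * y ^ n) z - deriv (fun y => ∑' n, c n * y ^ n) z =
      (∑' n, a n * z ^ n) * ∑' n, c n * z ^ n := by
  set d := fun n : ℕ => ((n : ℂ) + 1) * c (n + 1)
  have hd : ∀ n, ‖d n‖ ≤ C * M * (2 * M) ^ n := norm_succ_mul_coeff_succ_le hc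
  have hd' : ∀ n : ℕ, ‖((n : ℂ) + 1) * d (n + 1)‖ ≤ C * M * (2 * M) * (2 * (2 * M)) ^ n :=
    norm_succ_mul_coeff_succ_le hd
  have hz0 := norm_nonneg z
  have hderiv : deriv (fun y => ∑' n, c n * y ^ n) =ᶠ[𝓝 z] fun y => ∑' n, d n * y ^ n := by
    filter_upwards [(isOpen_lt (f := fun y : ℂ => ‖y‖ * M) (by fun_prop) continuous_const).mem_nhds
      (show ‖z‖ * M < 1 by nlinarith)] with y hy
    exact (hasDerivAt_tsum_mul_pow hc hM hy).deriv
  rw [hderiv.deriv_eq, (hasDerivAt_tsum_mul_pow hd (by positivity) (by nlinarith)).deriv,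
    hderiv.eq_of_nhds]
  exact mul_sub_eq_of_hasSum_of_recurrence hrec
    (summable_norm_mul_pow_of_norm_le hd (by positivity) (by nlinarith)).of_norm.hasSum
    (summable_norm_mul_pow_of_norm_le hd' (by positivity) (by linarith)).of_norm.hasSum
    (hasSum_sum_range_mul_mul_pow ha (summable_norm_mul_pow_of_norm_le hc hM.le (by nlinarith)))

end PowerSeries

theorem FormalMultilinearSeries.exists_norm_coeff_le_pow_succ {𝕜 E : Type*}
    [NontriviallyNormedField 𝕜] [NormedAddCommGroup E] [NormedSpace 𝕜 E]
    {p : FormalMultilinearSeries 𝕜 𝕜 E} (hp : 0 < p.radius) :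
    ∃ M > 0, ∀ k, ‖p.coeff k‖ ≤ M ^ (k + 1) := by
  obtain ⟨s, hs, hsp⟩ := ENNReal.lt_iff_exists_nnreal_btwn.mp hp
  have hs : (0 : ℝ) < s := by exact_mod_cast hs
  obtain ⟨K, hK, hpK⟩ := p.norm_mul_pow_le_of_lt_radius hsp
  refine ⟨max K (s : ℝ)⁻¹, by positivity, fun k => ?_⟩
  calc ‖p.coeff k‖ ≤ K * ((s : ℝ)⁻¹) ^ k := by
        rw [inv_pow, ← div_eq_mul_inv, le_div_iff₀ (by positivity), ← norm_apply_eq_norm_coef]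
        exact hpK k
    _ ≤ max K (s : ℝ)⁻¹ ^ (k + 1) := by
        rw [pow_succ']
        gcongr
        exacts [le_max_left _ _, le_max_right _ _]

theorem exists_frobenius_solution {q : ℂ → ℂ} (hq : AnalyticAt ℂ q 0)
    (hq' : deriv q 0 = q 0 ^ 2) :
    ∃ r > 0, ∃ h : ℂ → ℂ, DifferentiableOn ℂ h (ball 0 r) ∧ h 0 = 1 ∧
      ∀ z ∈ ball 0 r, z * deriv (deriv h) z - deriv h z = q z * h z := by
  obtain ⟨p, R, hp⟩ := hq
  have ha : p.coeff 1 = p.coeff 0 ^ 2 := by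
    rw [FormalMultilinearSeries.coeff, FormalMultilinearSeries.coeff, hp.coeff_zero]
    exact hp.hasFPowerSeriesAt.deriv ▸ hq'
  obtain ⟨M, hM, hpM⟩ := p.exists_norm_coeff_le_pow_succ (hp.r_pos.trans_le hp.r_le)
  obtain ⟨s, hs, hsR⟩ := ENNReal.lt_iff_exists_nnreal_btwn.mp hp.r_pos
  have hs : (0 : ℝ) < s := by exact_mod_cast hs
  have hc : ∀ n, ‖frobeniusCoeff p.coeff n‖ ≤ 1 * M ^ n := by
    simpa using norm_frobeniusCoeff_le hpM
  have hball : ∀ y ∈ ball (0 : ℂ) (min s (1 / (4 * M))), ‖y‖ < s ∧ ‖y‖ * (4 * M) < 1 := by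
    intro y hy
    rwa [mem_ball_zero_iff, lt_min_iff, lt_div_iff₀ (by positivity)] at hy
  refine ⟨min s (1 / (4 * M)), by positivity, fun y => ∑' n, frobeniusCoeff p.coeff n * y ^ n,
    fun y hy => ?_, ?_, fun z hz => ?_⟩
  · have hyM : ‖y‖ * M < 1 := by nlinarith [norm_nonneg y, hball y hy]
    exact (hasDerivAt_tsum_mul_pow hc hM hyM).differentiableAt.differentiableWithinAt
  · change ∑' n, frobeniusCoeff p.coeff n * 0 ^ n = 1
    rw [tsum_eq_single 0 fun n hn => by simp [hn]]
    simp [frobeniusCoeff]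
  · obtain ⟨hzs, hzM⟩ := hball z hz
    have hzR : z ∈ eball 0 R := by
      refine mem_eball_zero_iff.mpr (lt_of_lt_of_le ?_ hsR.le)
      rw [← ofReal_norm, ← ENNReal.ofReal_coe_nnreal]
      exact ENNReal.ofReal_lt_ofReal_iff'.mpr ⟨hzs, hs⟩
    have hqz : q z = ∑' n, p.coeff n * z ^ n := by
      simpa [mul_comm] using (hp.hasSum hzR).tsum_eq.symm
    rw [hqz]
    exact mul_deriv_deriv_sub_deriv_tsum_mul_pow hc hM (frobeniusCoeff_recurrence ha)
      (summable_norm_mul_pow_of_norm_le (fun k => (hpM k).trans_eq (pow_succ' M k)) hM.le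
        (by nlinarith [norm_nonneg z])) hzM

theorem deriv_eq_sq_of_mul_deriv_deriv_sub_deriv_eq {q h : ℂ → ℂ} {r : ℝ} (hr : 0 < r)
    (hq : DifferentiableAt ℂ q 0) (hh : DifferentiableOn ℂ h (ball 0 r)) (h0 : h 0 = 1)
    (hode : ∀ z ∈ ball 0 r, z * deriv (deriv h) z - deriv h z = q z * h z) :
    deriv q 0 = q 0 ^ 2 := by
  have hU : ball (0 : ℂ) r ∈ 𝓝 0 := ball_mem_nhds 0 hr
  have hh' := hh.deriv isOpen_ball
  have hh'' := hh'.deriv isOpen_ball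
  have hd0 : -deriv h 0 = q 0 := by simpa [h0] using hode 0 (mem_of_mem_nhds hU)
  have hlhs : HasDerivAt (fun z => z * deriv (deriv h) z - deriv h z) 0 0 := by
    simpa using ((hasDerivAt_id' (0 : ℂ)).fun_mul (hh''.differentiableAt hU).hasDerivAt).fun_sub
      (hh'.differentiableAt hU).hasDerivAt
  have hrhs := hq.hasDerivAt.mul ((hh.differentiableAt hU).hasDerivAt)
  have := hlhs.unique (hrhs.congr_of_eventuallyEq (Filter.eventually_of_mem hU hode))
  rw [h0] at this
  linear_combination -this + q 0 * hd0

/-- Apparent-singularity criterion: for the equation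
`f″ = (3/(4z²) + A/z + B + z·w(z))·f` near `z = 0`, a Frobenius solution
`f = z^{−1/2}·h(z)` with `h` holomorphic and `h(0) = 1` (i.e. a holomorphic
solution `h` of `z·h″ − h′ = (A + Bz + z²w)·h`) exists if and only if `A² = B`. -/
theorem apparent_singularity_criterion
    (ρ : ℝ) (hρ : 0 < ρ) (A B : ℂ) (w : ℂ → ℂ)
    (hw : DifferentiableOn ℂ w (ball (0 : ℂ) ρ)) :
    A ^ 2 = B ↔
      ∃ ρ' : ℝ, 0 < ρ' ∧ ρ' ≤ ρ ∧
        ∃ h : ℂ → ℂ, DifferentiableOn ℂ h (ball (0 : ℂ) ρ') ∧ h 0 = 1 ∧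
          ∀ z ∈ ball (0 : ℂ) ρ',
            z * deriv (deriv h) z - deriv h z = (A + B * z + z ^ 2 * w z) * h z := by
  have hw0 : AnalyticAt ℂ w 0 := hw.analyticAt (ball_mem_nhds 0 hρ)
  have hq : AnalyticAt ℂ (fun z => A + B * z + z ^ 2 * w z) 0 := by fun_prop
  have hq' : HasDerivAt (fun z => A + B * z + z ^ 2 * w z) B 0 := by
    simpa using ((hasDerivAt_id' (0 : ℂ)).const_mul B).const_add A |>.fun_add
      ((hasDerivAt_pow 2 (0 : ℂ)).fun_mul hw0.differentiableAt.hasDerivAt)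
  constructor
  · intro hAB
    obtain ⟨r, hr, h, hh, h0, hode⟩ :=
      exists_frobenius_solution hq (by simpa [hq'.deriv] using hAB.symm)
    have hsub := ball_subset_ball (x := (0 : ℂ)) (min_le_left r ρ)
    exact ⟨min r ρ, lt_min hr hρ, min_le_right r ρ, h, hh.mono hsub, h0,
      fun z hz => hode z (hsub hz)⟩
  · rintro ⟨ρ', hρ', -, h, hh, h0, hode⟩
    simpa [hq'.deriv, eq_comm] using
      deriv_eq_sq_of_mul_deriv_deriv_sub_deriv_eq hρ' hq.differentiableAt hh h0 hode
end

section
/- Let g ≥ 1 be an integer, let z₁,…,z_{g+2} ∈ ℂ be pairwise distinct, let λ₁,…,λ_g ∈ ℂ be pairwise distinct with λ_j ≠ z_k for all j, k. Define Q₂(z) = (1/4)·(∑_{j=1}^{g} 1/(z−λ_j) − ∑_{k=1}^{g+2} 1/(z−z_k))² + (1/2)·(∑_{j=1}^{g} 1/(z−λ_j)² − ∑_{k=1}^{g+2} 1/(z−z_k)²), and for a fixed index ℓ ∈ {1,…,g} set E_ℓ = (1/2)·(∑_{i≠ℓ} 1/(λ_ℓ−λ_i) − ∑_{k=1}^{g+2}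 1/(λ_ℓ−z_k)). Then, as z → λ_ℓ (z ≠ λ_ℓ): (a) (z−λ_ℓ)²·Q₂(z) → 3/4; (b) (z−λ_ℓ)·Q₂(z) − 3/(4(z−λ_ℓ)) → E_ℓ; (c) Q₂(z) − 3/(4(z−λ_ℓ)²) − E_ℓ/(z−λ_ℓ) → E_ℓ². -/
open Filter Topology

set_option maxHeartbeats 1600000 in
/-- Laurent expansion of `Q₂` near the apparent singularity `λ_ℓ`:
`Q₂(z) = 3/(4(z−λ_ℓ)²) + E_ℓ/(z−λ_ℓ) + E_ℓ² + O(z−λ_ℓ)`. -/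
theorem Q2_laurent_expansion_at_apparent_singularity
    (g : ℕ) (hg : 1 ≤ g) (p : Fin (g + 2) → ℂ) (l : Fin g → ℂ)
    (hp : Function.Injective p) (hl : Function.Injective l)
    (hlp : ∀ j k, l j ≠ p k) (ℓ : Fin g)
    (Q₂ : ℂ → ℂ)
    (hQ₂ : ∀ z, Q₂ z = (1 / 4) * ((∑ j, 1 / (z - l j)) - ∑ k, 1 / (z - p k)) ^ 2
        + (1 / 2) * ((∑ j, 1 / (z - l j) ^ 2) - ∑ k, 1 / (z - p k) ^ 2))
    (E : ℂ)
    (hE : E = (1 / 2) * ((∑ i ∈ Finset.univ.erase ℓ, 1 / (l ℓ - l i))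
        - ∑ k, 1 / (l ℓ - p k))) :
    Tendsto (fun z => (z - l ℓ) ^ 2 * Q₂ z) (𝓝[≠] (l ℓ)) (𝓝 (3 / 4)) ∧
    Tendsto (fun z => (z - l ℓ) * Q₂ z - 3 / (4 * (z - l ℓ))) (𝓝[≠] (l ℓ)) (𝓝 E) ∧
    Tendsto (fun z => Q₂ z - 3 / (4 * (z - l ℓ) ^ 2) - E / (z - l ℓ))
      (𝓝[≠] (l ℓ)) (𝓝 (E ^ 2)) := by
  classical
  obtain ⟨a, ha⟩ : ∃ a : ℂ, a = l ℓ := ⟨l ℓ, rfl⟩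
  rw [← ha] at hE ⊢
  set S : ℂ → ℂ := fun z =>
    (∑ i ∈ Finset.univ.erase ℓ, 1 / (z - l i)) - ∑ k, 1 / (z - p k) with hS
  set T : ℂ → ℂ := fun z =>
    (∑ i ∈ Finset.univ.erase ℓ, 1 / (z - l i) ^ 2) - ∑ k, 1 / (z - p k) ^ 2 with hT
  set D : ℂ → ℂ := fun z =>
    (∑ i ∈ Finset.univ.erase ℓ, -(1 / ((z - l i) * (a - l i))))
      + ∑ k, 1 / ((z - p k) * (a - p k)) with hD
  clear_value S T D
  -- nonvanishing at a
  have hal : ∀ i ∈ Finset.univ.erase ℓ, a - l i ≠ 0 := by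
    intro i hi
    refine sub_ne_zero.2 fun h => (Finset.mem_erase.1 hi).1 ?_
    exact (hl (ha.symm.trans h)).symm
  have hap : ∀ k, a - p k ≠ 0 := fun k => sub_ne_zero.2 (ha ▸ hlp ℓ k)
  -- eventually the denominators are nonzero
  have hev : ∀ᶠ z in 𝓝[≠] a,
      (∀ i ∈ Finset.univ.erase ℓ, z - l i ≠ 0) ∧ (∀ k, z - p k ≠ 0) := by
    have h1 : ∀ᶠ z in 𝓝 a, ∀ i ∈ Finset.univ.erase ℓ, z - l i ≠ 0 := by
      rw [Filter.eventually_all_finset]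
      intro i hi
      exact (eventually_ne_nhds (sub_ne_zero.1 (hal i hi))).mono fun z hz => sub_ne_zero.2 hz
    have h2 : ∀ᶠ z in 𝓝 a, ∀ k, z - p k ≠ 0 := by
      rw [Filter.eventually_all]
      intro k
      exact (eventually_ne_nhds (sub_ne_zero.1 (hap k))).mono fun z hz => sub_ne_zero.2 hz
    exact ((h1.and h2)).filter_mono nhdsWithin_le_nhds
  have hSa : S a = 2 * E := by simp only [hS]; rw [hE]; ring
  -- the key algebraic decomposition
  have key : ∀ z : ℂ, z - a ≠ 0 → (∀ i ∈ Finset.univ.erase ℓ, z - l i ≠ 0) →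
      (∀ k, z - p k ≠ 0) →
      Q₂ z = 3 / (4 * (z - a) ^ 2) + S z / (2 * (z - a)) + ((S z) ^ 2 / 4 + T z / 2) := by
    intro z hz _ _
    have e1 : (∑ j, 1 / (z - l j)) = 1 / (z - a) + ∑ i ∈ Finset.univ.erase ℓ, 1 / (z - l i) := by
      rw [ha]; exact (Finset.add_sum_erase _ _ (Finset.mem_univ ℓ)).symm
    have e2 : (∑ j, 1 / (z - l j) ^ 2)
        = 1 / (z - a) ^ 2 + ∑ i ∈ Finset.univ.erase ℓ, 1 / (z - l i) ^ 2 := by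
      rw [ha]; exact (Finset.add_sum_erase _ _ (Finset.mem_univ ℓ)).symm
    rw [hQ₂, e1, e2]
    simp only [hS, hT]
    generalize (∑ i ∈ Finset.univ.erase ℓ, 1 / (z - l i)) = A
    generalize (∑ k, 1 / (z - p k)) = B
    generalize (∑ i ∈ Finset.univ.erase ℓ, 1 / (z - l i) ^ 2) = A2
    generalize (∑ k, 1 / (z - p k) ^ 2) = B2
    generalize hu : z - a = u at hz ⊢
    have h2 : u ^ 2 ≠ 0 := pow_ne_zero _ hz
    field_simp
    try ring_nf
    try field_simp
    try ring
  -- S z = 2E + (z - a) * D z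
  have hstep : ∀ z : ℂ, (∀ i ∈ Finset.univ.erase ℓ, z - l i ≠ 0) → (∀ k, z - p k ≠ 0) →
      S z = 2 * E + (z - a) * D z := by
    intro z h1 h2
    have hA : (∑ i ∈ Finset.univ.erase ℓ, 1 / (z - l i))
        - (∑ i ∈ Finset.univ.erase ℓ, 1 / (a - l i))
        = ∑ i ∈ Finset.univ.erase ℓ, ((z - a) * (-(1 / ((z - l i) * (a - l i))))) := by
      rw [← Finset.sum_sub_distrib]
      refine Finset.sum_congr rfl fun i hi => ?_
      have h1i := h1 i hi
      have h2i := hal i hi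
      field_simp
      try ring
    have hB : (∑ k, 1 / (z - p k)) - (∑ k, 1 / (a - p k))
        = ∑ k, ((z - a) * (-(1 / ((z - p k) * (a - p k))))) := by
      rw [← Finset.sum_sub_distrib]
      refine Finset.sum_congr rfl fun k _ => ?_
      have h1k := h2 k
      have h2k := hap k
      field_simp
      try ring
    have hmain : S z - S a = (z - a) * D z := by
      have expand : S z - S a =
          ((∑ i ∈ Finset.univ.erase ℓ, 1 / (z - l i))
            - (∑ i ∈ Finset.univ.erase ℓ, 1 / (a - l i)))
          - ((∑ k, 1 / (z - p k)) - (∑ k, 1 / (a - p k))) := by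
        simp only [hS]; ring
      rw [expand, hA, hB, ← Finset.mul_sum, ← Finset.mul_sum, ← mul_sub]
      simp only [hD, Finset.sum_neg_distrib, mul_neg, neg_neg, sub_neg_eq_add]
      try ring_nf
      try rw [Finset.sum_neg_distrib]
      try ring
    linear_combination hmain + hSa
  -- continuity of S, T, D at a (as limits along the punctured filter)
  have tendsto_inv_lin : ∀ c : ℂ, a - c ≠ 0 →
      Tendsto (fun z : ℂ => 1 / (z - c)) (𝓝 a) (𝓝 (1 / (a - c))) := by
    intro c hc
    exact tendsto_const_nhds.div (tendsto_id.sub tendsto_const_nhds) hc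
  have tendsto_inv_sq : ∀ c : ℂ, a - c ≠ 0 →
      Tendsto (fun z : ℂ => 1 / (z - c) ^ 2) (𝓝 a) (𝓝 (1 / (a - c) ^ 2)) := by
    intro c hc
    exact tendsto_const_nhds.div ((tendsto_id.sub tendsto_const_nhds).pow 2) (pow_ne_zero 2 hc)
  have tendsto_inv_mul : ∀ c : ℂ, a - c ≠ 0 →
      Tendsto (fun z : ℂ => 1 / ((z - c) * (a - c))) (𝓝 a) (𝓝 (1 / ((a - c) * (a - c)))) := by
    intro c hc
    exact tendsto_const_nhds.div ((tendsto_id.sub tendsto_const_nhds).mul tendsto_const_nhds)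
      (mul_ne_zero hc hc)
  have hScont : Tendsto S (𝓝[≠] a) (𝓝 (S a)) := by
    apply Tendsto.mono_left _ nhdsWithin_le_nhds
    simp only [hS]
    exact (tendsto_finset_sum _ fun i hi => tendsto_inv_lin _ (hal i hi)).sub
      (tendsto_finset_sum _ fun k _ => tendsto_inv_lin _ (hap k))
  have hTcont : Tendsto T (𝓝[≠] a) (𝓝 (T a)) := by
    apply Tendsto.mono_left _ nhdsWithin_le_nhds
    simp only [hT]
    exact (tendsto_finset_sum _ fun i hi => tendsto_inv_sq _ (hal i hi)).sub
      (tendsto_finset_sum _ fun k _ => tendsto_inv_sq _ (hap k))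
  have hDcont : Tendsto D (𝓝[≠] a) (𝓝 (D a)) := by
    apply Tendsto.mono_left _ nhdsWithin_le_nhds
    simp only [hD]
    exact (tendsto_finset_sum _ fun i hi => (tendsto_inv_mul _ (hal i hi)).neg).add
      (tendsto_finset_sum _ fun k _ => tendsto_inv_mul _ (hap k))
  have h0 : Tendsto (fun z : ℂ => z - a) (𝓝[≠] a) (𝓝 0) := by
    have h : Tendsto (fun z : ℂ => z - a) (𝓝 a) (𝓝 (a - a)) :=
      tendsto_id.sub tendsto_const_nhds
    rw [sub_self] at h
    exact h.mono_left nhdsWithin_le_nhds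
  have hDa : D a = - T a := by
    simp only [hD, hT, Finset.sum_neg_distrib, ← pow_two]
    ring
  refine ⟨?_, ?_, ?_⟩
  · -- part (a)
    have heq : ∀ᶠ z in 𝓝[≠] a, (z - a) ^ 2 * Q₂ z
        = 3 / 4 + (z - a) * (S z / 2) + (z - a) ^ 2 * ((S z) ^ 2 / 4 + T z / 2) := by
      filter_upwards [hev, self_mem_nhdsWithin] with z hz hz'
      have hza : z - a ≠ 0 := sub_ne_zero.2 hz'
      rw [key z hza hz.1 hz.2]
      generalize hu : z - a = u at hza ⊢
      have h2 : u ^ 2 ≠ 0 := pow_ne_zero _ hza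
      field_simp
      try ring_nf
      try field_simp
      try ring
    have hlim : Tendsto (fun z => 3 / 4 + (z - a) * (S z / 2)
        + (z - a) ^ 2 * ((S z) ^ 2 / 4 + T z / 2)) (𝓝[≠] a)
        (𝓝 (3 / 4 + 0 * (S a / 2) + 0 ^ 2 * ((S a) ^ 2 / 4 + T a / 2))) :=
      (tendsto_const_nhds.add (h0.mul (hScont.div_const 2))).add
        ((h0.pow 2).mul (((hScont.pow 2).div_const 4).add (hTcont.div_const 2)))
    have hv : (3 / 4 + 0 * (S a / 2) + 0 ^ 2 * ((S a) ^ 2 / 4 + T a / 2)) = (3 / 4 : ℂ) := by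
      ring
    rw [hv] at hlim
    exact hlim.congr' (heq.mono fun z h => h.symm)
  · -- part (b)
    have heq : ∀ᶠ z in 𝓝[≠] a, (z - a) * Q₂ z - 3 / (4 * (z - a))
        = S z / 2 + (z - a) * ((S z) ^ 2 / 4 + T z / 2) := by
      filter_upwards [hev, self_mem_nhdsWithin] with z hz hz'
      have hza : z - a ≠ 0 := sub_ne_zero.2 hz'
      rw [key z hza hz.1 hz.2]
      generalize hu : z - a = u at hza ⊢
      have h2 : u ^ 2 ≠ 0 := pow_ne_zero _ hza
      field_simp
      try ring_nf
      try field_simp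
      try ring
    have hlim : Tendsto (fun z => S z / 2 + (z - a) * ((S z) ^ 2 / 4 + T z / 2)) (𝓝[≠] a)
        (𝓝 (S a / 2 + 0 * ((S a) ^ 2 / 4 + T a / 2))) :=
      (hScont.div_const 2).add
        (h0.mul (((hScont.pow 2).div_const 4).add (hTcont.div_const 2)))
    have hv : (S a / 2 + 0 * ((S a) ^ 2 / 4 + T a / 2)) = E := by
      rw [hSa]; ring
    rw [hv] at hlim
    exact hlim.congr' (heq.mono fun z h => h.symm)
  · -- part (c)
    have heq : ∀ᶠ z in 𝓝[≠] a, Q₂ z - 3 / (4 * (z - a) ^ 2) - E / (z - a)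
        = D z / 2 + (S z) ^ 2 / 4 + T z / 2 := by
      filter_upwards [hev, self_mem_nhdsWithin] with z hz hz'
      have hza : z - a ≠ 0 := sub_ne_zero.2 hz'
      rw [key z hza hz.1 hz.2, hstep z hz.1 hz.2]
      generalize hu : z - a = u at hza ⊢
      have h2 : u ^ 2 ≠ 0 := pow_ne_zero _ hza
      field_simp
      try ring_nf
      try field_simp
      try ring
    have hlim : Tendsto (fun z => D z / 2 + (S z) ^ 2 / 4 + T z / 2) (𝓝[≠] a)
        (𝓝 (D a / 2 + (S a) ^ 2 / 4 + T a / 2)) :=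
      ((hDcont.div_const 2).add ((hScont.pow 2).div_const 4)).add (hTcont.div_const 2)
    have hv : (D a / 2 + (S a) ^ 2 / 4 + T a / 2) = E ^ 2 := by
      rw [hDa, hSa]; ring
    rw [hv] at hlim
    exact hlim.congr' (heq.mono fun z h => h.symm)
end

section
/- Let g ≥ 1 be an integer, let z₁,…,z_{g+2} ∈ ℂ be pairwise distinct, let λ₁,…,λ_g ∈ ℂ be pairwise distinct with λ_j ≠ z_k for all j, k, and let μ₁,…,μ_g, γ₁,…,γ_{g+2}, r₁,…,r_{g+2}, H₁,…,H_{g+2} ∈ ℂ and ℏ ∈ ℂ with ℏ ≠ 0. Define Q₀(z) = ∑_{k=1}^{g+2} ( r_k²/(z−z_k)² + H_k/(z−z_k) ). Fix ℓ ∈ {1,…,g}, assume μ_ℓ² = Q₀(λ_ℓ), and set E_ℓ = (1/2)·(∑_{i≠ℓ} 1/(λ_ℓ−λ_i) − ∑_{k=1}^{g+2} 1/(λ_ℓ−z_k)) and Q₁^{reg}(λ_ℓ) = ∑_{i≠ℓ} μ_i/(λ_ℓ−λ_i) + ∑_{k=1}^{g+2} γ_k/(λ_ℓ−z_k). Then the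 equation (μ_ℓ/ℏ + E_ℓ)² = Q₀(λ_ℓ)/ℏ² + Q₁^{reg}(λ_ℓ)/ℏ + E_ℓ² holds if and only if the Bethe equation at index ℓ holds: ∑_{k=1}^{g+2} γ_k/(λ_ℓ−z_k) = ∑_{i≠ℓ} (μ_ℓ−μ_i)/(λ_ℓ−λ_i) − μ_ℓ·∑_{k=1}^{g+2} 1/(λ_ℓ−z_k). -/
/-- The apparent-singularity condition `(μ_ℓ/ℏ + E_ℓ)² = Q₀(λ_ℓ)/ℏ² + Q₁^{reg}(λ_ℓ)/ℏ + E_ℓ²`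
is equivalent to the Bethe equation at index `ℓ`. -/
theorem apparent_singularity_iff_bethe
    (g : ℕ) (hg : 1 ≤ g) (p : Fin (g + 2) → ℂ) (l : Fin g → ℂ)
    (hp : Function.Injective p) (hl : Function.Injective l)
    (hlp : ∀ j k, l j ≠ p k)
    (μ : Fin g → ℂ) (γ r H : Fin (g + 2) → ℂ) (ℏ : ℂ) (hℏ : ℏ ≠ 0)
    (Q₀ : ℂ → ℂ)
    (hQ₀ : ∀ z, Q₀ z = ∑ k, ((r k) ^ 2 / (z - p k) ^ 2 + H k / (z - p k)))
    (ℓ : Fin g) (hμℓ : (μ ℓ) ^ 2 = Q₀ (l ℓ))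
    (E : ℂ)
    (hE : E = (1 / 2) * ((∑ i ∈ Finset.univ.erase ℓ, 1 / (l ℓ - l i))
        - ∑ k, 1 / (l ℓ - p k)))
    (Q₁reg : ℂ)
    (hQ₁reg : Q₁reg = (∑ i ∈ Finset.univ.erase ℓ, μ i / (l ℓ - l i))
        + ∑ k, γ k / (l ℓ - p k)) :
    (μ ℓ / ℏ + E) ^ 2 = Q₀ (l ℓ) / ℏ ^ 2 + Q₁reg / ℏ + E ^ 2 ↔
      ∑ k, γ k / (l ℓ - p k)
        = (∑ i ∈ Finset.univ.erase ℓ, (μ ℓ - μ i) / (l ℓ - l i))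
          - μ ℓ * ∑ k, 1 / (l ℓ - p k) := by
  have hsub : ∑ i ∈ Finset.univ.erase ℓ, (μ ℓ - μ i) / (l ℓ - l i)
      = μ ℓ * (∑ i ∈ Finset.univ.erase ℓ, 1 / (l ℓ - l i))
        - ∑ i ∈ Finset.univ.erase ℓ, μ i / (l ℓ - l i) := by
    rw [Finset.mul_sum, ← Finset.sum_sub_distrib]
    refine Finset.sum_congr rfl fun i _ => ?_
    ring
  rw [← hμℓ, hQ₁reg, hsub]
  have hdiv : ∀ x y : ℂ, x / ℏ = y / ℏ ↔ x = y := by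
    intro x y
    exact div_left_inj' hℏ
  have expand : (μ ℓ / ℏ + E) ^ 2
      = μ ℓ ^ 2 / ℏ ^ 2 + (2 * μ ℓ * E) / ℏ + E ^ 2 := by
    field_simp
    ring
  rw [expand]
  have step : (μ ℓ ^ 2 / ℏ ^ 2 + (2 * μ ℓ * E) / ℏ + E ^ 2
      = μ ℓ ^ 2 / ℏ ^ 2
        + ((∑ i ∈ Finset.univ.erase ℓ, μ i / (l ℓ - l i)) + ∑ k, γ k / (l ℓ - p k)) / ℏ
        + E ^ 2)
      ↔ ((2 * μ ℓ * E) / ℏ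
        = ((∑ i ∈ Finset.univ.erase ℓ, μ i / (l ℓ - l i)) + ∑ k, γ k / (l ℓ - p k)) / ℏ) := by
    constructor
    · intro h; linear_combination h
    · intro h; linear_combination h
  rw [step, hdiv, hE]
  constructor
  · intro h; linear_combination -h
  · intro h; linear_combination -h
end

section
/- Let g ≥ 1 be an integer, let z₁,…,z_{g+2} ∈ ℂ be pairwise distinct, let λ₁,…,λ_g ∈ ℂ be pairwise distinct with λ_j ≠ z_k for all j, k, and let μ₁,…,μ_g, γ₁,…,γ_{g+2}, r₁,…,r_{g+2}, H₁,…,H_{g+2} ∈ ℂ. Define Q₀(z) = ∑_{k=1}^{g+2} ( r_k²/(z−z_k)² + H_k/(z−z_k) ), Q₁(z) = ∑_{j=1}^{g} μ_j/(z−λ_j) + ∑_{k=1}^{g+2} γ_k/(z−z_k), and Q₂(z) = (1/4)·(∑_{j} 1/(z−λ_j) − ∑_{k} 1/(z−z_k))² + (1/2)·(∑_{j} 1/(z−λ_j)² − ∑_{k} 1/(z−z_k)²). Fix ℓ ∈ {1,…,g} with μ_ℓ ≠ 0 and Q₀(λ_ℓ) = μ_ℓ², and let m be a holomorphic function on an open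 neighborhood V of λ_ℓ (with V disjoint from {z₁,…,z_{g+2}} and from {λ_i : i ≠ ℓ}) such that m(z)² = Q₀(z) on V and m(λ_ℓ) = μ_ℓ. Define W(z) = ( Q₂(z) − Q₁(z)²/(4·Q₀(z)) ) / (2·m(z)) for z ∈ V with z ≠ λ_ℓ and Q₀(z) ≠ 0. Then (z−λ_ℓ)·( W(z) − 1/(4·μ_ℓ·(z−λ_ℓ)²) ) tends to 0 as z → λ_ℓ if and only if the Bethe equation at index ℓ holds: ∑_{k=1}^{g+2} γ_k/(λ_ℓ−z_k) = ∑_{i≠ℓ} (μ_ℓ−μ_i)/(λ_ℓ−λ_i) − μ_ℓ·∑_{k=1}^{g+2} 1/(λ_ℓ−z_k). -/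
/-!
Write `u = z - λ_ℓ`. Splitting off the terms with `j = ℓ`, `Q₁ = μ_ℓ/u + b` and
`Q₂ = ¼(1/u + s)² + ½(1/u² + t)` with `s, t, b` holomorphic at `λ_ℓ`. Hence
`P = u²W = (¼(1 + us)² + ½(1 + u²t) - (μ_ℓ + ub)²/(4m²))/(2m)` is holomorphic at `λ_ℓ` with
`P(λ_ℓ) = 1/(4μ_ℓ)`, so `u(W - 1/(4μ_ℓu²))` is the difference quotient of `P` and tends to
`P'(λ_ℓ) = (μ_ℓ s(λ_ℓ) - b(λ_ℓ))/(4μ_ℓ²)`, the derivative of `m` cancelling out. This vanishes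
exactly when `μ_ℓ s(λ_ℓ) = b(λ_ℓ)`, which is the Bethe equation at `ℓ`.
-/

open Filter Topology Finset

section SingularPart

variable {x a : ℂ} {m s t b : ℂ → ℂ}

theorem hasDerivAt_sq_mul_singularPart (ha : a ≠ 0) (hs : DifferentiableAt ℂ s x)
    (ht : DifferentiableAt ℂ t x) (hb : DifferentiableAt ℂ b x) (hm : DifferentiableAt ℂ m x)
    (hmx : m x = a) :
    HasDerivAt (fun z => ((1 / 4) * (1 + (z - x) * s z) ^ 2 + (1 / 2) * (1 + (z - x) ^ 2 * t z)
        - (a + (z - x) * b z) ^ 2 / (4 * m z ^ 2)) / (2 * m z))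
      ((a * s x - b x) / (4 * a ^ 2)) x := by
  have hu : HasDerivAt (fun z : ℂ => z - x) 1 x := (hasDerivAt_id x).sub_const x
  have hm' := hm.hasDerivAt
  have hmx0 : m x ≠ 0 := hmx ▸ ha
  have hF := ((((hu.mul hs.hasDerivAt).const_add 1).pow 2).const_mul (1 / 4 : ℂ)).add
    ((((hu.pow 2).mul ht.hasDerivAt).const_add 1).const_mul (1 / 2 : ℂ))
  have hG := (((hu.mul hb.hasDerivAt).const_add a).pow 2).div ((hm'.pow 2).const_mul 4)
    (by simp [hmx0])
  refine ((hF.sub hG).div (hm'.const_mul 2) (by simp [hmx0])).congr_deriv ?_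
  simp only [Pi.add_apply, Pi.sub_apply, Pi.mul_apply, Pi.div_apply, Pi.pow_apply, sub_self,
    zero_mul, zero_pow two_ne_zero, add_zero, hmx]
  field_simp
  ring

theorem tendsto_residue_singularPart {Q₀ Q₁ Q₂ : ℂ → ℂ} (ha : a ≠ 0)
    (hs : DifferentiableAt ℂ s x) (ht : DifferentiableAt ℂ t x) (hb : DifferentiableAt ℂ b x)
    (hm : DifferentiableAt ℂ m x) (hmx : m x = a) (hQ₀ : ∀ᶠ z in 𝓝 x, Q₀ z = m z ^ 2)
    (hQ₁ : ∀ z, Q₁ z = a / (z - x) + b z)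
    (hQ₂ : ∀ z, Q₂ z = (1 / 4) * (1 / (z - x) + s z) ^ 2 + (1 / 2) * (1 / (z - x) ^ 2 + t z)) :
    Tendsto (fun z => (z - x) * ((Q₂ z - Q₁ z ^ 2 / (4 * Q₀ z)) / (2 * m z)
        - 1 / (4 * a * (z - x) ^ 2)))
      (𝓝[≠] x) (𝓝 ((a * s x - b x) / (4 * a ^ 2))) := by
  refine (hasDerivAt_iff_tendsto_slope.mp
    (hasDerivAt_sq_mul_singularPart ha hs ht hb hm hmx)).congr' ?_
  filter_upwards [nhdsWithin_le_nhds hQ₀, self_mem_nhdsWithin] with z hQ₀z hz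
  have hu : z - x ≠ 0 := sub_ne_zero.mpr hz
  rw [slope_def_field, hQ₀z, hQ₁, hQ₂, hmx]
  field_simp
  ring

end SingularPart

theorem Filter.Tendsto.tendsto_nhds_iff_eq {α β : Type*} [TopologicalSpace β] [T2Space β]
    {f : α → β} {l : Filter α} [l.NeBot] {b c : β} (h : Tendsto f l (𝓝 b)) :
    Tendsto f l (𝓝 c) ↔ b = c :=
  ⟨tendsto_nhds_unique h, fun hbc => hbc ▸ h⟩

theorem differentiableAt_sum_div_sub_pow {ι : Type*} (S : Finset ι) (c w : ι → ℂ) (n : ℕ)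
    {x : ℂ} (hw : ∀ i ∈ S, w i ≠ x) :
    DifferentiableAt ℂ (fun z => ∑ i ∈ S, c i / (z - w i) ^ n) x :=
  DifferentiableAt.fun_sum fun i hi => (differentiableAt_const _).div
    ((differentiableAt_id.sub_const _).pow n) (pow_ne_zero n (sub_ne_zero.mpr (hw i hi).symm))

theorem residue_v1_vanishes_iff_bethe_general
    (g : ℕ) (p : Fin (g + 2) → ℂ) (l : Fin g → ℂ)
    (hl : Function.Injective l)
    (hlp : ∀ j k, l j ≠ p k)
    (μ : Fin g → ℂ) (γ : Fin (g + 2) → ℂ)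
    (Q₀ Q₁ Q₂ : ℂ → ℂ)
    (hQ₁ : ∀ z, Q₁ z = (∑ j, μ j / (z - l j)) + ∑ k, γ k / (z - p k))
    (hQ₂ : ∀ z, Q₂ z = (1 / 4) * ((∑ j, 1 / (z - l j)) - ∑ k, 1 / (z - p k)) ^ 2
        + (1 / 2) * ((∑ j, 1 / (z - l j) ^ 2) - ∑ k, 1 / (z - p k) ^ 2))
    (ℓ : Fin g) (hμℓ : μ ℓ ≠ 0)
    (V : Set ℂ) (hV : IsOpen V) (hℓV : l ℓ ∈ V)
    (m : ℂ → ℂ) (hm : DifferentiableOn ℂ m V)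
    (hm2 : ∀ z ∈ V, (m z) ^ 2 = Q₀ z) (hmℓ : m (l ℓ) = μ ℓ) :
    Tendsto
      (fun z => (z - l ℓ) *
        ((Q₂ z - (Q₁ z) ^ 2 / (4 * Q₀ z)) / (2 * m z)
          - 1 / (4 * μ ℓ * (z - l ℓ) ^ 2)))
      (𝓝[≠] (l ℓ)) (𝓝 0) ↔
    ∑ k, γ k / (l ℓ - p k)
      = (∑ i ∈ Finset.univ.erase ℓ, (μ ℓ - μ i) / (l ℓ - l i))
        - μ ℓ * ∑ k, 1 / (l ℓ - p k) := by
  have hl' : ∀ i ∈ univ.erase ℓ, l i ≠ l ℓ := fun i hi => hl.ne (ne_of_mem_erase hi)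
  have hp' : ∀ k ∈ (univ : Finset (Fin (g + 2))), p k ≠ l ℓ := fun k _ => (hlp ℓ k).symm
  have hs : DifferentiableAt ℂ
      (fun z => (∑ i ∈ univ.erase ℓ, 1 / (z - l i)) - ∑ k, 1 / (z - p k)) (l ℓ) := by
    simpa only [pow_one] using (differentiableAt_sum_div_sub_pow _ (fun _ => 1) l 1 hl').fun_sub
      (differentiableAt_sum_div_sub_pow _ (fun _ => 1) p 1 hp')
  have ht : DifferentiableAt ℂ
      (fun z => (∑ i ∈ univ.erase ℓ, 1 / (z - l i) ^ 2) - ∑ k, 1 / (z - p k) ^ 2) (l ℓ) :=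
    (differentiableAt_sum_div_sub_pow _ (fun _ => 1) l 2 hl').fun_sub
      (differentiableAt_sum_div_sub_pow _ (fun _ => 1) p 2 hp')
  have hb : DifferentiableAt ℂ
      (fun z => (∑ i ∈ univ.erase ℓ, μ i / (z - l i)) + ∑ k, γ k / (z - p k)) (l ℓ) := by
    simpa only [pow_one] using (differentiableAt_sum_div_sub_pow _ μ l 1 hl').fun_add
      (differentiableAt_sum_div_sub_pow _ γ p 1 hp')
  have hlim := tendsto_residue_singularPart (Q₀ := Q₀) (Q₁ := Q₁) (Q₂ := Q₂) hμℓ hs ht hb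
    (hm.differentiableAt (hV.mem_nhds hℓV)) hmℓ
    (eventually_of_mem (hV.mem_nhds hℓV) fun z hz => (hm2 z hz).symm)
    (fun z => by rw [hQ₁, ← add_sum_erase _ _ (mem_univ ℓ)]; ring)
    (fun z => by
      rw [hQ₂, ← add_sum_erase _ _ (mem_univ ℓ),
        ← add_sum_erase _ (fun j => 1 / (z - l j) ^ 2) (mem_univ ℓ)]
      ring)
  rw [hlim.tendsto_nhds_iff_eq, div_eq_zero_iff, or_iff_left (by simp [hμℓ]), sub_eq_zero]
  simp only [sub_div, sum_sub_distrib, ← mul_one_div (μ ℓ), ← mul_sum]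
  constructor <;> intro h <;> linear_combination -h

/-- The residue of the subleading WKB differential `v₁` at the point
`λ_ℓ^{(1)} = (λ_ℓ, μ_ℓ)` of the WKB curve vanishes if and only if the Bethe
equation at index `ℓ` holds.  Here `W = (Q₂ − Q₁²/(4Q₀))/(2m)` is the singular
part of `v₁/dz` at `λ_ℓ`, with `m` a holomorphic branch of `√Q₀` with
`m(λ_ℓ) = μ_ℓ`, and the vanishing of the residue is expressed as
`(z−λ_ℓ)·(W(z) − 1/(4μ_ℓ(z−λ_ℓ)²)) → 0` as `z → λ_ℓ`. -/
theorem residue_v1_vanishes_iff_bethe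
    (g : ℕ) (hg : 1 ≤ g) (p : Fin (g + 2) → ℂ) (l : Fin g → ℂ)
    (hp : Function.Injective p) (hl : Function.Injective l)
    (hlp : ∀ j k, l j ≠ p k)
    (μ : Fin g → ℂ) (γ r H : Fin (g + 2) → ℂ)
    (Q₀ Q₁ Q₂ : ℂ → ℂ)
    (hQ₀ : ∀ z, Q₀ z = ∑ k, ((r k) ^ 2 / (z - p k) ^ 2 + H k / (z - p k)))
    (hQ₁ : ∀ z, Q₁ z = (∑ j, μ j / (z - l j)) + ∑ k, γ k / (z - p k))
    (hQ₂ : ∀ z, Q₂ z = (1 / 4) * ((∑ j, 1 / (z - l j)) - ∑ k, 1 / (z - p k)) ^ 2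
        + (1 / 2) * ((∑ j, 1 / (z - l j) ^ 2) - ∑ k, 1 / (z - p k) ^ 2))
    (ℓ : Fin g) (hμℓ : μ ℓ ≠ 0) (hQ₀ℓ : Q₀ (l ℓ) = (μ ℓ) ^ 2)
    (V : Set ℂ) (hV : IsOpen V) (hℓV : l ℓ ∈ V)
    (hVp : ∀ k, p k ∉ V) (hVl : ∀ i, i ≠ ℓ → l i ∉ V)
    (m : ℂ → ℂ) (hm : DifferentiableOn ℂ m V)
    (hm2 : ∀ z ∈ V, (m z) ^ 2 = Q₀ z) (hmℓ : m (l ℓ) = μ ℓ) :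
    Tendsto
      (fun z => (z - l ℓ) *
        ((Q₂ z - (Q₁ z) ^ 2 / (4 * Q₀ z)) / (2 * m z)
          - 1 / (4 * μ ℓ * (z - l ℓ) ^ 2)))
      (𝓝[≠] (l ℓ)) (𝓝 0) ↔
    ∑ k, γ k / (l ℓ - p k)
      = (∑ i ∈ Finset.univ.erase ℓ, (μ ℓ - μ i) / (l ℓ - l i))
        - μ ℓ * ∑ k, 1 / (l ℓ - p k) :=
  residue_v1_vanishes_iff_bethe_general g p l hl hlp μ γ Q₀ Q₁ Q₂ hQ₁ hQ₂ ℓ hμℓ V hV hℓV m hm hm2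
    hmℓ
end

section
/- Let ℏ ∈ ℂ with ℏ ≠ 0. For ξ in the slit plane ℂ ∖ (−∞,0], define f₊(ξ) = ξ^{−1/2}·exp(ξ²/ℏ) and f₋(ξ) = ξ^{−1/2}·exp(−ξ²/ℏ), where ξ^{−1/2} denotes the principal branch of the complex power. Then f₊ and f₋ are twice differentiable on the slit plane and satisfy f″(ξ) = (4ξ²/ℏ² + 3/(4ξ²))·f(ξ) there; moreover their Wronskian satisfies f₊(ξ)·f₋′(ξ) − f₊′(ξ)·f₋(ξ) = −4/ℏ for all ξ in the slit plane, so f₊ and f₋ are linearly independent. -/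
/-!
Writing `f_c(ξ) = ξ^{-1/2} e^{c ξ²}`, one has `f_c' = (2cξ - 1/(2ξ)) f_c`, and differentiating once
more gives `f_c'' = (4c²ξ² + 3/(4ξ²)) f_c`: the two `2c` terms cancel, so the potential depends
on `c` only through `c²`. Hence `c = 1/ℏ` and `c = -1/ℏ` both solve the model equation. Since
`f_c f_d = ξ⁻¹ e^{(c+d)ξ²}`, the Wronskian of `f_c, f_d` is `2(d - c) e^{(c+d)ξ²}`, which is
`-4/ℏ ≠ 0` for `c = -d = 1/ℏ`; a nonvanishing Wronskian at a single point already forces a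
vanishing linear combination to be trivial.
-/

open Complex Filter Topology

theorem HasDerivAt.coeffs_eq_zero_of_wronskian_ne_zero {𝕜 : Type*} [NontriviallyNormedField 𝕜]
    {f g : 𝕜 → 𝕜} {a b x α β : 𝕜} (hf : HasDerivAt f a x) (hg : HasDerivAt g b x)
    (hW : f x * b - a * g x ≠ 0) (h : ∀ᶠ y in 𝓝 x, α * f y + β * g y = 0) :
    α = 0 ∧ β = 0 := by
  have hval : α * f x + β * g x = 0 := h.self_of_nhds
  have hderiv : α * a + β * b = 0 :=
    ((hf.const_mul α).add (hg.const_mul β)).unique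
      ((hasDerivAt_const x (0 : 𝕜)).congr_of_eventuallyEq h)
  constructor
  · refine (mul_eq_zero.mp ?_).resolve_right hW
    linear_combination b * hval - g x * hderiv
  · refine (mul_eq_zero.mp ?_).resolve_right hW
    linear_combination f x * hderiv - a * hval

namespace LocalModel

noncomputable def sol (c x : ℂ) : ℂ := x ^ (-(1 : ℂ) / 2) * exp (c * x ^ 2)

noncomputable def solDeriv (c x : ℂ) : ℂ := (2 * c * x - 1 / (2 * x)) * sol c x

variable {c : ℂ} {ξ : ℂ}

theorem hasDerivAt_sol (hξ : ξ ∈ slitPlane) : HasDerivAt (sol c) (solDeriv c ξ) ξ := by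
  have hξ₀ : ξ ≠ 0 := slitPlane_ne_zero hξ
  have hpow : HasDerivAt (fun x : ℂ => x ^ (-(1 : ℂ) / 2))
      (-(1 : ℂ) / 2 * ξ ^ (-(1 : ℂ) / 2 - 1) * 1) ξ :=
    (hasDerivAt_id ξ).cpow_const hξ
  have hexp : HasDerivAt (fun x : ℂ => exp (c * x ^ 2)) (exp (c * ξ ^ 2) * (c * (2 * ξ ^ 1))) ξ :=
    ((hasDerivAt_pow 2 ξ).const_mul c).cexp
  have hpow_sub_one : ξ ^ (-(1 : ℂ) / 2 - 1) = ξ ^ (-(1 : ℂ) / 2) * ξ⁻¹ := by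
    rw [sub_eq_add_neg, cpow_add _ _ hξ₀, cpow_neg, cpow_one]
  refine (hpow.mul hexp).congr_deriv ?_
  rw [hpow_sub_one, solDeriv, sol]
  field_simp
  ring

theorem hasDerivAt_solDeriv (hξ : ξ ∈ slitPlane) :
    HasDerivAt (solDeriv c) ((4 * c ^ 2 * ξ ^ 2 + 3 / (4 * ξ ^ 2)) * sol c ξ) ξ := by
  have hξ₀ : ξ ≠ 0 := slitPlane_ne_zero hξ
  have hcoeff : HasDerivAt (fun x : ℂ => 2 * c * x - 1 / (2 * x)) (2 * c + 1 / (2 * ξ ^ 2)) ξ := by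
    have h : HasDerivAt (fun x : ℂ => 2 * c * x - 2⁻¹ * x⁻¹) (2 * c * 1 - 2⁻¹ * -(ξ ^ 2)⁻¹) ξ :=
      ((hasDerivAt_id' ξ).const_mul (2 * c)).sub ((hasDerivAt_inv hξ₀).const_mul 2⁻¹)
    convert h using 1
    · funext x; ring
    · ring
  refine (hcoeff.mul (hasDerivAt_sol hξ)).congr_deriv ?_
  rw [solDeriv]
  field_simp
  ring

theorem sol_mul_sol (hξ : ξ ≠ 0) (d : ℂ) : sol c ξ * sol d ξ = ξ⁻¹ * exp ((c + d) * ξ ^ 2) := by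
  have hhalf : ξ ^ (-(1 : ℂ) / 2) * ξ ^ (-(1 : ℂ) / 2) = ξ⁻¹ := by
    rw [← cpow_add _ _ hξ, show -(1 : ℂ) / 2 + -(1 : ℂ) / 2 = -1 by ring, cpow_neg_one]
  rw [sol, sol, add_mul, exp_add, ← hhalf]
  ring

theorem wronskian_sol (hξ : ξ ≠ 0) (d : ℂ) :
    sol c ξ * solDeriv d ξ - solDeriv c ξ * sol d ξ = 2 * (d - c) * exp ((c + d) * ξ ^ 2) := by
  have hprod := sol_mul_sol (c := c) hξ d
  calc sol c ξ * solDeriv d ξ - solDeriv c ξ * sol d ξ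
      = 2 * (d - c) * ξ * (sol c ξ * sol d ξ) := by rw [solDeriv, solDeriv]; ring
    _ = 2 * (d - c) * exp ((c + d) * ξ ^ 2) := by rw [hprod]; field_simp

end LocalModel

open LocalModel

/-- The local model near an apparent singularity: on the slit plane
`ℂ ∖ (−∞,0]`, the functions `f₊(ξ) = ξ^{−1/2}e^{ξ²/ℏ}` and
`f₋(ξ) = ξ^{−1/2}e^{−ξ²/ℏ}` are twice differentiable, solve
`f″ = (4ξ²/ℏ² + 3/(4ξ²))·f`, have Wronskian `f₊f₋′ − f₊′f₋ = −4/ℏ`,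
and are linearly independent. -/
theorem local_model_no_stokes
    (ℏ : ℂ) (hℏ : ℏ ≠ 0) :
    ∃ fp' fm' : ℂ → ℂ,
      (∀ ξ ∈ Complex.slitPlane,
        HasDerivAt (fun x : ℂ => x ^ (-(1 : ℂ) / 2) * Complex.exp (x ^ 2 / ℏ))
          (fp' ξ) ξ ∧
        HasDerivAt (fun x : ℂ => x ^ (-(1 : ℂ) / 2) * Complex.exp (-(x ^ 2) / ℏ))
          (fm' ξ) ξ) ∧
      (∀ ξ ∈ Complex.slitPlane,
        HasDerivAt fp'
          ((4 * ξ ^ 2 / ℏ ^ 2 + 3 / (4 * ξ ^ 2)) *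
            (ξ ^ (-(1 : ℂ) / 2) * Complex.exp (ξ ^ 2 / ℏ))) ξ ∧
        HasDerivAt fm'
          ((4 * ξ ^ 2 / ℏ ^ 2 + 3 / (4 * ξ ^ 2)) *
            (ξ ^ (-(1 : ℂ) / 2) * Complex.exp (-(ξ ^ 2) / ℏ))) ξ) ∧
      (∀ ξ ∈ Complex.slitPlane,
        (ξ ^ (-(1 : ℂ) / 2) * Complex.exp (ξ ^ 2 / ℏ)) * fm' ξ
          - fp' ξ * (ξ ^ (-(1 : ℂ) / 2) * Complex.exp (-(ξ ^ 2) / ℏ)) = -4 / ℏ) ∧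
      (∀ α β : ℂ,
        (∀ ξ ∈ Complex.slitPlane,
          α * (ξ ^ (-(1 : ℂ) / 2) * Complex.exp (ξ ^ 2 / ℏ))
            + β * (ξ ^ (-(1 : ℂ) / 2) * Complex.exp (-(ξ ^ 2) / ℏ)) = 0) →
        α = 0 ∧ β = 0) := by
  have hplus (x : ℂ) : x ^ (-(1 : ℂ) / 2) * exp (x ^ 2 / ℏ) = sol ℏ⁻¹ x := by
    rw [sol, div_eq_inv_mul (x ^ 2)]
  have hminus (x : ℂ) : x ^ (-(1 : ℂ) / 2) * exp (-(x ^ 2) / ℏ) = sol (-ℏ⁻¹) x := by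
    rw [sol, neg_mul, ← div_eq_inv_mul, neg_div ℏ (x ^ 2)]
  have hpotential (c ξ : ℂ) (hc : c ^ 2 = ℏ⁻¹ ^ 2) :
      4 * ξ ^ 2 / ℏ ^ 2 + 3 / (4 * ξ ^ 2) = 4 * c ^ 2 * ξ ^ 2 + 3 / (4 * ξ ^ 2) := by
    rw [hc]; ring
  have hW (ξ : ℂ) (hξ : ξ ∈ slitPlane) : sol ℏ⁻¹ ξ * solDeriv (-ℏ⁻¹) ξ
      - solDeriv ℏ⁻¹ ξ * sol (-ℏ⁻¹) ξ = -4 / ℏ := by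
    rw [wronskian_sol (slitPlane_ne_zero hξ)]
    simp only [add_neg_cancel, zero_mul, exp_zero]
    ring
  simp only [hplus, hminus]
  refine ⟨solDeriv ℏ⁻¹, solDeriv (-ℏ⁻¹),
    fun ξ hξ => ⟨hasDerivAt_sol hξ, hasDerivAt_sol hξ⟩,
    fun ξ hξ => ⟨?_, ?_⟩, hW, fun α β h => ?_⟩
  · rw [hpotential ℏ⁻¹ ξ rfl]; exact hasDerivAt_solDeriv hξ
  · rw [hpotential (-ℏ⁻¹) ξ (neg_sq _)]; exact hasDerivAt_solDeriv hξ
  · refine (hasDerivAt_sol (c := ℏ⁻¹) one_mem_slitPlane).coeffs_eq_zero_of_wronskian_ne_zero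
      (hasDerivAt_sol (c := -ℏ⁻¹) one_mem_slitPlane) ?_ ?_
    · rw [hW 1 one_mem_slitPlane]; simpa using hℏ
    · filter_upwards [isOpen_slitPlane.mem_nhds one_mem_slitPlane] using h
end

section
/- Let n ≥ 1, let z₁,…,zₙ ∈ ℂ be pairwise distinct, and let R₁,…,Rₙ be 2×2 complex matrices with trace(R_j) = 0 for each j. For each j define H_j = ∑_{k≠j} trace(R_j·R_k)/(z_j−z_k). Then for every z ∈ ℂ ∖ {z₁,…,zₙ}: −det( ∑_{j=1}^{n} (z−z_j)^{-1}·R_j ) = ∑_{j=1}^{n} ( (−det R_j)/(z−z_j)² + H_j/(z−z_j) ). -/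
open Finset Matrix

private lemma neg_det_eq_half_trace_sq (M : Matrix (Fin 2) (Fin 2) ℂ)
    (h : Matrix.trace M = 0) : -M.det = Matrix.trace (M * M) / 2 := by
  rw [Matrix.trace_fin_two] at h
  have h11 : M 1 1 = -M 0 0 := by linear_combination h
  simp only [Matrix.det_fin_two, Matrix.trace_fin_two, Matrix.mul_apply,
    Fin.sum_univ_two, h11]
  ring

private lemma sum_erase_swap {n : ℕ} (f : Fin n → Fin n → ℂ) :
    ∑ j, ∑ k ∈ Finset.univ.erase j, f j k
      = ∑ j, ∑ k ∈ Finset.univ.erase j, f k j := by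
  have h : ∀ g : Fin n → Fin n → ℂ, ∑ j, ∑ k ∈ Finset.univ.erase j, g j k
      = ∑ j, ∑ k, if k ≠ j then g j k else 0 := by
    intro g
    refine Finset.sum_congr rfl fun j _ => ?_
    rw [← Finset.sum_filter]
    congr 1
    ext k
    simp [Finset.mem_erase]
  rw [h, h, Finset.sum_comm]
  refine Finset.sum_congr rfl fun j _ => Finset.sum_congr rfl fun k _ => ?_
  by_cases hjk : j = k
  · simp [hjk]
  · simp [hjk, Ne.symm hjk]

/-- Partial-fraction decomposition of `Q₀(z) = −det R(z)` for a traceless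
Fuchsian system `R(z) = ∑ⱼ Rⱼ/(z−zⱼ)`:
`−det R(z) = ∑ⱼ ((−det Rⱼ)/(z−zⱼ)² + Hⱼ/(z−zⱼ))`, where
`Hⱼ = ∑_{k≠j} tr(RⱼR_k)/(zⱼ−z_k)` are the isomonodromic Hamiltonians. -/
theorem Q0_partial_fractions_hamiltonians
    (n : ℕ) (hn : 1 ≤ n) (p : Fin n → ℂ) (hp : Function.Injective p)
    (R : Fin n → Matrix (Fin 2) (Fin 2) ℂ)
    (htr : ∀ j, Matrix.trace (R j) = 0)
    (H : Fin n → ℂ)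
    (hH : ∀ j, H j = ∑ k ∈ Finset.univ.erase j,
        Matrix.trace (R j * R k) / (p j - p k)) :
    ∀ z : ℂ, (∀ j, z ≠ p j) →
      -Matrix.det (∑ j, (z - p j)⁻¹ • R j)
        = ∑ j, ((-Matrix.det (R j)) / (z - p j) ^ 2 + H j / (z - p j)) := by
  intro z hz
  have hzc : ∀ j, z - p j ≠ 0 := fun j => sub_ne_zero.mpr (hz j)
  set c : Fin n → ℂ := fun j => (z - p j)⁻¹ with hc
  set t : Fin n → Fin n → ℂ := fun j k => Matrix.trace (R j * R k) with ht
  set S : Matrix (Fin 2) (Fin 2) ℂ := ∑ j, c j • R j with hS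
  have htrS : Matrix.trace S = 0 := by
    simp [hS, Matrix.trace_sum, htr]
  rw [neg_det_eq_half_trace_sq S htrS]
  have hSS : Matrix.trace (S * S) = ∑ j, ∑ k, (c j * c k) * t j k := by
    rw [hS, Finset.sum_mul_sum]
    rw [Matrix.trace_sum]
    refine Finset.sum_congr rfl fun j _ => ?_
    rw [Matrix.trace_sum]
    refine Finset.sum_congr rfl fun k _ => ?_
    rw [smul_mul_assoc, mul_smul_comm, smul_smul, Matrix.trace_smul, ht,
      smul_eq_mul]
  rw [hSS]
  -- split diagonal and off-diagonal
  have hsplit : ∑ j, ∑ k, (c j * c k) * t j k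
      = (∑ j, (c j * c j) * t j j)
        + ∑ j, ∑ k ∈ Finset.univ.erase j, (c j * c k) * t j k := by
    rw [← Finset.sum_add_distrib]
    refine Finset.sum_congr rfl fun j _ => ?_
    exact (Finset.add_sum_erase Finset.univ _ (Finset.mem_univ j)).symm
  rw [hsplit]
  -- the off-diagonal double sum equals 2 * ∑ j, H j * c j
  have hpjk : ∀ j k : Fin n, j ≠ k → p j - p k ≠ 0 := fun j k hjk =>
    sub_ne_zero.mpr (fun h => hjk (hp h))
  have hcc : ∀ j k : Fin n, j ≠ k →
      c j * c k = c j / (p j - p k) - c k / (p j - p k) := by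
    intro j k hjk
    have h1 := hzc j
    have h2 := hzc k
    have h3 := hpjk j k hjk
    simp only [hc]
    field_simp
    ring
  have hoff : ∑ j, ∑ k ∈ Finset.univ.erase j, (c j * c k) * t j k
      = 2 * ∑ j, H j * c j := by
    have step1 : ∑ j, ∑ k ∈ Finset.univ.erase j, (c j * c k) * t j k
        = (∑ j, ∑ k ∈ Finset.univ.erase j, t j k / (p j - p k) * c j)
          - ∑ j, ∑ k ∈ Finset.univ.erase j, t j k / (p j - p k) * c k := by
      rw [← Finset.sum_sub_distrib]
      refine Finset.sum_congr rfl fun j _ => ?_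
      rw [← Finset.sum_sub_distrib]
      refine Finset.sum_congr rfl fun k hk => ?_
      have hjk : j ≠ k := (Finset.ne_of_mem_erase hk).symm
      rw [hcc j k hjk]
      field_simp
    have step2 : ∑ j, ∑ k ∈ Finset.univ.erase j, t j k / (p j - p k) * c k
        = - ∑ j, ∑ k ∈ Finset.univ.erase j, t j k / (p j - p k) * c j := by
      rw [sum_erase_swap (fun j k => t j k / (p j - p k) * c k)]
      rw [← Finset.sum_neg_distrib]
      refine Finset.sum_congr rfl fun j _ => ?_
      rw [← Finset.sum_neg_distrib]
      refine Finset.sum_congr rfl fun k hk => ?_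
      have hjk : j ≠ k := (Finset.ne_of_mem_erase hk).symm
      have htsym : t k j = t j k := by
        simp only [ht]
        exact Matrix.trace_mul_comm (R k) (R j)
      rw [htsym]
      have : p k - p j = -(p j - p k) := by ring
      rw [this, div_neg]
      ring
    have hHc : ∀ j, ∑ k ∈ Finset.univ.erase j, t j k / (p j - p k) * c j
        = H j * c j := by
      intro j
      rw [hH j, Finset.sum_mul]
    rw [step1, step2]
    simp only [hHc]
    ring
  rw [hoff]
  -- diagonal: (c j * c j) * t j j = 2 * ((-det (R j)) / (z - p j)^2)
  have hdiag : ∀ j ∈ Finset.univ, (c j * c j) * t j j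
      = 2 * ((-Matrix.det (R j)) / (z - p j) ^ 2) := by
    intro j _
    rw [neg_det_eq_half_trace_sq (R j) (htr j)]
    simp only [hc, ht]
    have h0 := hzc j
    field_simp
  rw [Finset.sum_congr rfl hdiag, ← Finset.mul_sum]
  have hrhs : ∀ j ∈ Finset.univ,
      (-Matrix.det (R j)) / (z - p j) ^ 2 + H j / (z - p j)
        = (-Matrix.det (R j)) / (z - p j) ^ 2 + H j * c j := by
    intro j _
    simp only [hc, div_eq_mul_inv]
  rw [Finset.sum_congr rfl hrhs, Finset.sum_add_distrib]
  ring
end
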